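/- arXiv:2004.14076 — 4 statements merged into one kernel-verified Lean document; each statement's English description precedes it below -/
import Mathlib

section
/- Let A and B be 1×k_A and 1×k_B integer matrices with all entries nonzero, where k_B ≥ k_A ≥ 3. Then m(A,B) = (k_A·k_B - k_A)/(k_A·k_B - k_A - k_B), where m(A,B) is the maximum over partitions W ∪ W̄ = [k_A] with |W| ≥ 2 of |W|/(|W|-1+rank(A_{W̄})-rank(A)+1/m(B)) and m(B) = (k_B-1)/(k_B-2). -/
/-!
Since `A` is a single row with nonzero entries, `rank A = 1`, and the restriction of `A` to the
columns outside `W` has rank `1` unless `W` is everything, where it has rank `0`. Writing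
`ε = 1 - 1/m(B) = 1/(k_B - 1)`, the candidate values are `|W| / (|W| - ε)` for proper `W` and
`k_A / (k_A - 1 - ε)` for `W = [k_A]`. The first is decreasing in `|W|`, so it is at most
`2 / (2 - ε)`, and this is at most the second exactly when `k_A ≤ 2 k_B`.
-/

open Finset

theorem Matrix.rank_eq_one_of_unique_of_ne_zero {m n R : Type*} [Unique m] [Fintype n]
    [CommRing R] [IsDomain R] (M : Matrix m n R) {i : m} {j : n} (h : M i j ≠ 0) :
    M.rank = 1 := by
  classical
  refine le_antisymm (M.rank_le_card_height.trans (by simp)) ?_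
  rw [Nat.one_le_iff_ne_zero, ← Nat.pos_iff_ne_zero, Matrix.rank,
    Module.finrank_pos_iff_exists_ne_zero (R := R)]
  refine ⟨⟨M.mulVecLin (Pi.single j 1), _, rfl⟩, fun hz => h ?_⟩
  simpa [Matrix.mulVec_single] using congrFun (congrArg Subtype.val hz) i

theorem Matrix.rank_eq_zero_of_isEmpty {m n R : Type*} [Fintype n] [IsEmpty n]
    [CommRing R] [Nontrivial R] (M : Matrix m n R) : M.rank = 0 := by
  rw [Subsingleton.elim M 0, Matrix.rank_zero]

theorem div_sub_two_add_one_div_div_eq {K : Type*} [Field K] {a b : K} (hb : b - 1 ≠ 0) :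
    a / (a - 2 + 1 / ((b - 1) / (b - 2))) = (a * b - a) / (a * b - a - b) := by
  have hden : a - 2 + 1 / ((b - 1) / (b - 2)) = (a * b - a - b) / (b - 1) := by
    field_simp
    ring
  rw [hden, div_div_eq_mul_div, mul_sub_one]

theorem div_sub_one_add_one_div_div_le {K : Type*} [Field K] [LinearOrder K]
    [IsStrictOrderedRing K] {a b w : K} (hw : 1 ≤ w) (ha : 2 ≤ a) (hb : 2 < b)
    (hab : a ≤ w * b) :
    w / (w - 1 + 1 / ((b - 1) / (b - 2))) ≤ (a * b - a) / (a * b - a - b) := by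
  have hb1 : 0 < b - 1 := by linarith
  have hden : 0 < a * b - a - b := by nlinarith
  have hw' : w - 1 + 1 / ((b - 1) / (b - 2)) = (w * (b - 1) - 1) / (b - 1) := by
    field_simp
    ring
  rw [hw', div_div_eq_mul_div, div_le_div_iff₀ (by nlinarith) hden]
  -- cross-multiplied, the inequality is just `a ≤ w * b`
  nlinarith

theorem stmt_1_general (kA kB : ℕ) (hkA : 3 ≤ kA) (hk : kA ≤ kB)
    (A : Matrix (Fin 1) (Fin kA) ℤ)
    (hA : ∀ j, A 0 j ≠ 0) :
    IsGreatest
      {x : ℚ | ∃ W : Finset (Fin kA), 2 ≤ W.card ∧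
        x = (W.card : ℚ) /
          ((W.card : ℚ) - 1 +
            ((A.submatrix id (fun j : {y // y ∈ Wᶜ} => (j : Fin kA))).rank : ℚ) -
            (A.rank : ℚ) +
            1 / (((kB : ℚ) - 1) / ((kB : ℚ) - 2)))}
      (((kA : ℚ) * kB - kA) / ((kA : ℚ) * kB - kA - kB)) := by
  have hkA' : (3 : ℚ) ≤ kA := by exact_mod_cast hkA
  have hk' : (kA : ℚ) ≤ kB := by exact_mod_cast hk
  have hrank : A.rank = 1 := A.rank_eq_one_of_unique_of_ne_zero (hA ⟨0, by omega⟩)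
  have huniv : ((kA : ℚ) * kB - kA) / ((kA : ℚ) * kB - kA - kB) =
      ((univ : Finset (Fin kA)).card : ℚ) / (((univ : Finset (Fin kA)).card : ℚ) - 1 +
        ((A.submatrix id (fun j : {y // y ∈ (univ : Finset (Fin kA))ᶜ} =>
          (j : Fin kA))).rank : ℚ) - (A.rank : ℚ) +
        1 / (((kB : ℚ) - 1) / ((kB : ℚ) - 2))) := by
    have : IsEmpty {y : Fin kA // y ∈ (univ : Finset (Fin kA))ᶜ} :=
      ⟨fun y => by simpa using y.2⟩
    rw [Matrix.rank_eq_zero_of_isEmpty, hrank, card_univ, Fintype.card_fin,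
      ← div_sub_two_add_one_div_div_eq (by linarith)]
    push_cast
    ring_nf
  refine ⟨⟨univ, by rw [card_univ, Fintype.card_fin]; omega, huniv⟩, ?_⟩
  rintro _ ⟨W, hW, rfl⟩
  rcases eq_or_ne W univ with rfl | hWu
  · exact huniv.symm.le
  obtain ⟨j, hj⟩ : ∃ j, j ∉ W := by simpa [eq_univ_iff_forall] using hWu
  have hW' : (2 : ℚ) ≤ W.card := by exact_mod_cast hW
  rw [Matrix.rank_eq_one_of_unique_of_ne_zero _ (j := ⟨j, mem_compl.mpr hj⟩) (hA j), hrank,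
    Nat.cast_one, sub_add_cancel]
  exact div_sub_one_add_one_div_div_le (by linarith) (by linarith) (by linarith) (by nlinarith)

/-- For 1×k_A and 1×k_B integer matrices A, B with nonzero entries and
k_B ≥ k_A ≥ 3, m(A,B) = (k_A k_B - k_A)/(k_A k_B - k_A - k_B), where m(A,B) is the
maximum over partitions [k_A] = W ∪ W̄ with |W| ≥ 2 of
|W|/(|W|-1+rank(A_{W̄})-rank(A)+1/m(B)) and m(B) = (k_B-1)/(k_B-2). -/
theorem stmt_1 (kA kB : ℕ) (hkA : 3 ≤ kA) (hk : kA ≤ kB)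
    (A : Matrix (Fin 1) (Fin kA) ℤ) (B : Matrix (Fin 1) (Fin kB) ℤ)
    (hA : ∀ j, A 0 j ≠ 0) (hB : ∀ j, B 0 j ≠ 0) :
    IsGreatest
      {x : ℚ | ∃ W : Finset (Fin kA), 2 ≤ W.card ∧
        x = (W.card : ℚ) /
          ((W.card : ℚ) - 1 +
            ((A.submatrix id (fun j : {y // y ∈ Wᶜ} => (j : Fin kA))).rank : ℚ) -
            (A.rank : ℚ) +
            1 / (((kB : ℚ) - 1) / ((kB : ℚ) - 2)))}
      (((kA : ℚ) * kB - kA) / ((kA : ℚ) * kB - kA - kB)) :=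
  stmt_1_general kA kB hkA hk A hA
end

section
/- Let A and B be irredundant integer matrices satisfying m(A) ≥ m(B) > 0. If m(A,B) is defined as the maximum over column partitions W ∪ W̄ of the columns of A with |W| ≥ 2 of |W|/(|W|-1+rank(A_{W̄})-rank(A)+1/m(B)) (where all denominators are positive), then m(A,A) = m(A) and m(A,B) ≥ m(B). -/
/-- Rank of the submatrix of `A` given by the columns in the complement of `W`. -/
noncomputable def colRank {l k : ℕ} (A : Matrix (Fin l) (Fin k) ℤ)
    (W : Finset (Fin k)) : ℕ :=
  (A.submatrix id (fun j : {y // y ∈ Wᶜ} => (j : Fin k))).rank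

/-- The set of values whose maximum is m(A). -/
noncomputable def mSet {l k : ℕ} (A : Matrix (Fin l) (Fin k) ℤ) : Set ℚ :=
  {x | ∃ W : Finset (Fin k), 2 ≤ W.card ∧
    x = ((W.card : ℚ) - 1) / ((W.card : ℚ) - 1 + (colRank A W : ℚ) - (A.rank : ℚ))}

/-- The set of values whose maximum is m(A,B), given mB = m(B). -/
noncomputable def mABSet {l k : ℕ} (A : Matrix (Fin l) (Fin k) ℤ) (mB : ℚ) : Set ℚ :=
  {x | ∃ W : Finset (Fin k), 2 ≤ W.card ∧
    x = (W.card : ℚ) / ((W.card : ℚ) - 1 + (colRank A W : ℚ) - (A.rank : ℚ) + 1 / mB)}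

/-- for irredundant integer matrices A, B with m(A) ≥ m(B) > 0 and all
denominators positive, m(A,A) = m(A) and m(A,B) ≥ m(B). -/
theorem stmt_2 {lA kA lB kB : ℕ}
    (A : Matrix (Fin lA) (Fin kA) ℤ) (B : Matrix (Fin lB) (Fin kB) ℤ)
    (hAirr : ∃ x : Fin kA → ℤ, (∀ i, 0 < x i) ∧ Function.Injective x ∧ A.mulVec x = 0)
    (hBirr : ∃ x : Fin kB → ℤ, (∀ i, 0 < x i) ∧ Function.Injective x ∧ B.mulVec x = 0)
    (mA mB mAA mAB : ℚ)
    (hmA : IsGreatest (mSet A) mA) (hmB : IsGreatest (mSet B) mB)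
    (hmB0 : 0 < mB) (hle : mB ≤ mA)
    (hdenA : ∀ W : Finset (Fin kA), 2 ≤ W.card →
      0 < (W.card : ℚ) - 1 + (colRank A W : ℚ) - (A.rank : ℚ))
    (hdenB : ∀ W : Finset (Fin kB), 2 ≤ W.card →
      0 < (W.card : ℚ) - 1 + (colRank B W : ℚ) - (B.rank : ℚ))
    (hdenAA : ∀ W : Finset (Fin kA), 2 ≤ W.card →
      0 < (W.card : ℚ) - 1 + (colRank A W : ℚ) - (A.rank : ℚ) + 1 / mA)
    (hdenAB : ∀ W : Finset (Fin kA), 2 ≤ W.card →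
      0 < (W.card : ℚ) - 1 + (colRank A W : ℚ) - (A.rank : ℚ) + 1 / mB)
    (hmAA : IsGreatest (mABSet A mA) mAA)
    (hmAB : IsGreatest (mABSet A mB) mAB) :
    mAA = mA ∧ mB ≤ mAB := by
  obtain ⟨W, hW, hWeq⟩ := hmA.1
  have hmA0 : 0 < mA := lt_of_lt_of_le hmB0 hle
  set d : ℚ := (W.card : ℚ) - 1 + (colRank A W : ℚ) - (A.rank : ℚ) with hd
  have hd0 : 0 < d := hdenA W hW
  rw [eq_div_iff hd0.ne'] at hWeq
  have heAA : (0:ℚ) < d + 1 / mA := hdenAA W hW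
  have heAB : (0:ℚ) < d + 1 / mB := hdenAB W hW
  have hmem : mA ∈ mABSet A mA := by
    refine ⟨W, hW, ?_⟩
    rw [eq_div_iff heAA.ne']
    field_simp
    linarith [hWeq]
  have hub : ∀ x ∈ mABSet A mA, x ≤ mA := by
    rintro x ⟨W', hW', rfl⟩
    have hd'0 : 0 < (W'.card : ℚ) - 1 + (colRank A W' : ℚ) - (A.rank : ℚ) := hdenA W' hW'
    have he'0 := hdenAA W' hW'
    have hb : ((W'.card : ℚ) - 1) / ((W'.card : ℚ) - 1 + (colRank A W' : ℚ) - (A.rank : ℚ)) ≤ mA :=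
      hmA.2 ⟨W', hW', rfl⟩
    rw [div_le_iff₀ hd'0] at hb
    rw [div_le_iff₀ he'0]
    have : mA * (1 / mA) = 1 := by field_simp
    nlinarith [this]
  have h1 : mAA = mA := le_antisymm (hub mAA hmAA.1) (hmAA.2 hmem)
  have hmemB : (W.card : ℚ) / (d + 1 / mB) ∈ mABSet A mB := ⟨W, hW, rfl⟩
  have h2 : mB ≤ (W.card : ℚ) / (d + 1 / mB) := by
    rw [le_div_iff₀ heAB]
    have h3 : mB * (1 / mB) = 1 := by field_simp
    nlinarith [mul_le_mul_of_nonneg_right hle hd0.le]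
  exact ⟨h1, h2.trans (hmAB.2 hmemB)⟩
end

section
/- Let H be a hypergraph on vertex set V whose edges are partitioned into 'A-edges' and 'B-edges'. Say H is Rado if every red-blue colouring of V yields a red A-edge (all vertices red) or a blue B-edge (all vertices blue). Suppose H is Rado but H−e is not Rado for every edge e (H is Rado minimal), and H is non-empty. Then for every A-edge a of H and every vertex v ∈ a, there exists a B-edge b of H with a ∩ b = {v}; and symmetrically, for every B-edge b of H and every vertex v ∈ b, there exists an A-edge a of H with a ∩ b = {v}. -/
/-!
Take a colouring witnessing that `H - a` is not Rado. Since `H` is Rado, `a` is then the only red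
A-edge and no B-edge is blue. Recolouring a vertex `v ∈ a` blue destroys every red A-edge, so some
B-edge `b` becomes blue; `b` must contain `v`, and it meets the red edge `a` nowhere else.
The statement for B-edges follows by exchanging the colours.
-/

/-- A hypergraph with A-edges `EA` and B-edges `EB` is Rado if every red-blue
colouring of the vertices (red = `true`, blue = `false`) yields a red A-edge
or a blue B-edge. -/
def RadoHG {V : Type*} (EA EB : Set (Finset V)) : Prop :=
  ∀ c : V → Bool,
    (∃ a ∈ EA, ∀ v ∈ a, c v = true) ∨ (∃ b ∈ EB, ∀ v ∈ b, c v = false)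

namespace RadoHG

variable {V : Type*} {EA EB : Set (Finset V)}

theorem symm (h : RadoHG EA EB) : RadoHG EB EA := fun c =>
  (h (fun v => !c v)).symm.imp (by simp) (by simp)

theorem exists_inter_eq_singleton [DecidableEq V] {a : Finset V} {v : V} (hR : RadoHG EA EB)
    (ha : a ∈ EA) (hmin : ¬ RadoHG (EA \ {a}) EB) (hv : v ∈ a) :
    ∃ b ∈ EB, a ∩ b = {v} := by
  obtain ⟨c, hA, hB⟩ : ∃ c : V → Bool,
      (∀ a' ∈ EA, a' ≠ a → ∃ w ∈ a', c w = false) ∧ ∀ b ∈ EB, ∃ w ∈ b, c w = true := by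
    simpa [RadoHG] using hmin
  have ha_red : ∀ w ∈ a, c w = true := by
    rcases hR c with ⟨a', ha', hred⟩ | ⟨b, hb, hblue⟩
    · by_cases h : a' = a
      · exact h ▸ hred
      · obtain ⟨w, hw, hcw⟩ := hA a' ha' h
        simp [hred w hw] at hcw
    · obtain ⟨w, hw, hcw⟩ := hB b hb
      simp [hblue w hw] at hcw
  set c' := Function.update c v false
  have hc' : ∀ w, w ≠ v → c' w = c w := fun w hw => Function.update_of_ne hw _ _
  rcases hR c' with ⟨a', ha', hred⟩ | ⟨b, hb, hblue⟩
  · exfalso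
    by_cases h : a' = a
    · subst h
      simpa [c'] using hred v hv
    · obtain ⟨w, hw, hcw⟩ := hA a' ha' h
      have hwv : w ≠ v := by
        rintro rfl
        simpa [c'] using hred w hw
      simpa [hc' w hwv, hcw] using hred w hw
  · refine ⟨b, hb, ?_⟩
    have hvb : v ∈ b := by
      obtain ⟨u, hu, hcu⟩ := hB b hb
      by_contra hvb
      have huv : u ≠ v := fun h => hvb (h ▸ hu)
      simpa [hc' u huv, hcu] using hblue u hu
    ext w
    simp only [Finset.mem_inter, Finset.mem_singleton]
    refine ⟨fun ⟨hwa, hwb⟩ => ?_, fun hw => hw ▸ ⟨hv, hvb⟩⟩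
    by_contra hwv
    simpa [hc' w hwv, ha_red w hwa] using hblue w hwb

end RadoHG

theorem stmt_3_general {V : Type*} [DecidableEq V] (EA EB : Set (Finset V))
    (hR : RadoHG EA EB)
    (hminA : ∀ a ∈ EA, ¬ RadoHG (EA \ {a}) EB)
    (hminB : ∀ b ∈ EB, ¬ RadoHG EA (EB \ {b})) :
    (∀ a ∈ EA, ∀ v ∈ a, ∃ b ∈ EB, a ∩ b = {v}) ∧
    (∀ b ∈ EB, ∀ v ∈ b, ∃ a ∈ EA, a ∩ b = {v}) := by
  refine ⟨fun a ha v hv => hR.exists_inter_eq_singleton ha (hminA a ha) hv, fun b hb v hv => ?_⟩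
  obtain ⟨a, ha, hba⟩ :=
    hR.symm.exists_inter_eq_singleton hb (fun h => hminB b hb h.symm) hv
  exact ⟨a, ha, Finset.inter_comm a b ▸ hba⟩

/-- if H (with A-edges EA and B-edges EB) is non-empty and Rado minimal,
then every vertex v of an A-edge a admits a B-edge b with a ∩ b = {v}, and
symmetrically. -/
theorem stmt_3 {V : Type*} [DecidableEq V] (EA EB : Set (Finset V))
    (hne : EA.Nonempty ∨ EB.Nonempty)
    (hR : RadoHG EA EB)
    (hminA : ∀ a ∈ EA, ¬ RadoHG (EA \ {a}) EB)
    (hminB : ∀ b ∈ EB, ¬ RadoHG EA (EB \ {b})) :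
    (∀ a ∈ EA, ∀ v ∈ a, ∃ b ∈ EB, a ∩ b = {v}) ∧
    (∀ b ∈ EB, ∀ v ∈ b, ∃ a ∈ EA, a ∩ b = {v}) :=
  stmt_3_general EA EB hR hminA hminB
end

section
/- Let H be a hypergraph whose edges are partitioned into A-edges and B-edges, and suppose H is Rado minimal and non-empty. Suppose further that H contains no two A-edges intersecting in at least 2 vertices, no A-cycle, and no arbitrarily long A-paths (i.e., the A-edges of H form vertex-disjoint A-trees, meaning the 'intersection graph' structure of the A-edges is a forest with pairwise intersections of size at most 1). Then for every B-edge b of H there exist |b| pairwise distinct A-edges a_v (v in b) of H such that each vertex v of b lies in a_v and a_v ∩ b = {v}. -/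
/-- An A-path of length s: distinct A-edges with consecutive edges meeting in exactly
one vertex and non-consecutive edges disjoint. -/
def IsAPath {V : Type*} [DecidableEq V] (EA : Set (Finset V)) (s : ℕ)
    (f : Fin s → Finset V) : Prop :=
  Function.Injective f ∧ (∀ i, f i ∈ EA) ∧
  (∀ i j : Fin s, (i : ℕ) + 1 = (j : ℕ) → (f i ∩ f j).card = 1) ∧
  (∀ i j : Fin s, (i : ℕ) + 1 < (j : ℕ) → f i ∩ f j = ∅)

/-- An A-cycle of length s ≥ 3: distinct A-edges with cyclically consecutive edges
meeting in exactly one vertex and all other pairs disjoint. -/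
def IsACycle {V : Type*} [DecidableEq V] (EA : Set (Finset V)) (s : ℕ)
    (f : Fin s → Finset V) : Prop :=
  3 ≤ s ∧ Function.Injective f ∧ (∀ i, f i ∈ EA) ∧
  (∀ i j : Fin s, (i : ℕ) < (j : ℕ) →
    (((j : ℕ) = (i : ℕ) + 1 ∨ ((i : ℕ) = 0 ∧ (j : ℕ) = s - 1)) →
      (f i ∩ f j).card = 1)) ∧
  (∀ i j : Fin s, (i : ℕ) < (j : ℕ) →
    (¬ ((j : ℕ) = (i : ℕ) + 1 ∨ ((i : ℕ) = 0 ∧ (j : ℕ) = s - 1)) →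
      f i ∩ f j = ∅))

/-- if H is Rado minimal and non-empty, no two A-edges meet in ≥ 2
vertices, there is no A-cycle and no arbitrarily long A-path (so the A-edges form
vertex-disjoint A-trees), then every vertex v of every B-edge b lies in an A-edge a
with a ∩ b = {v}. -/
theorem stmt_11 {V : Type*} [DecidableEq V] (EA EB : Set (Finset V))
    (hne : EA.Nonempty ∨ EB.Nonempty)
    (hR : RadoHG EA EB)
    (hminA : ∀ a ∈ EA, ¬ RadoHG (EA \ {a}) EB)
    (hminB : ∀ b ∈ EB, ¬ RadoHG EA (EB \ {b}))
    (hpair : ∀ a ∈ EA, ∀ a' ∈ EA, a ≠ a' → (a ∩ a').card ≤ 1)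
    (hnocyc : ¬ ∃ (s : ℕ) (f : Fin s → Finset V), IsACycle EA s f)
    (hbdd : ∃ L : ℕ, ∀ (s : ℕ) (f : Fin s → Finset V), IsAPath EA s f → s ≤ L) :
    ∀ b ∈ EB, ∀ v ∈ b, ∃ a ∈ EA, a ∩ b = {v} := by
  intro b hb v hv
  have h := hminB b hb
  unfold RadoHG at h
  push_neg at h
  obtain ⟨c, hA, hB⟩ := h
  -- b must be all blue under c
  have hball : ∀ w ∈ b, c w = false := by
    rcases hR c with ⟨a, ha, hared⟩ | ⟨b', hb', hblue⟩
    · obtain ⟨w, hw, hw'⟩ := hA a ha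
      exact absurd (hared w hw) hw'
    · by_cases hbb : b' = b
      · subst hbb; exact hblue
      · obtain ⟨w, hw, hw'⟩ := hB b' ⟨hb', hbb⟩
        exact absurd (hblue w hw) hw'
  -- recolour v red
  set c' : V → Bool := fun w => if w = v then true else c w with hc'
  rcases hR c' with ⟨a, ha, hared⟩ | ⟨b', hb', hblue⟩
  · refine ⟨a, ha, ?_⟩
    have hva : v ∈ a := by
      by_contra hva
      obtain ⟨w, hw, hw'⟩ := hA a ha
      have := hared w hw
      simp only [hc'] at this
      rw [if_neg (by rintro rfl; exact hva hw)] at this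
      exact hw' this
    ext w
    simp only [Finset.mem_inter, Finset.mem_singleton]
    constructor
    · rintro ⟨hwa, hwb⟩
      by_contra hwv
      have h1 := hared w hwa
      simp only [hc', if_neg hwv] at h1
      rw [hball w hwb] at h1
      exact Bool.false_ne_true h1
    · rintro rfl; exact ⟨hva, hv⟩
  · exfalso
    have hvb' : v ∉ b' := by
      intro hvb'
      have := hblue v hvb'
      simp [hc'] at this
    have hbb : b' ≠ b := fun h => hvb' (h ▸ hv)
    obtain ⟨w, hw, hw'⟩ := hB b' ⟨hb', hbb⟩
    have := hblue w hw
    simp only [hc'] at this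
    rw [if_neg (show w ≠ v from fun h => hvb' (h ▸ hw))] at this
    exact hw' this
end
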